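/- For every natural number i > 0, f(2 / (3^i - 1)) = 2^(i-1) / (3^i - 2^i). -/

import Mathlib

/-!
The point `x = 2 / (3 ^ i - 1)` satisfies `3 ^ (i - 1) * x = (2 + x) / 3`. Applying the first
functional equation `i - 1` times and then the third one expresses `f x` linearly in itself,
`f x = (2 / 3) ^ (i - 1) * (1 / 3 + 2 / 3 * f x)`, and solving gives the value.
-/

open intervalIntegral Set

theorem apply_eq_pow_mul_apply_pow_mul {f : ℝ → ℝ} {a c : ℝ} (ha : 1 ≤ a)
    (hf : ∀ x ∈ Icc (0 : ℝ) 1, f (x / a) = c * f x) (k : ℕ) {y : ℝ} (hy : 0 ≤ y)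
    (hk : a ^ k * y ≤ 1) : f y = c ^ k * f (a ^ k * y) := by
  induction k with
  | zero => simp
  | succ k ih =>
    have ha0 : a ≠ 0 := by positivity
    have hstep : a ^ k * y ≤ a ^ (k + 1) * y :=
      mul_le_mul_of_nonneg_right (pow_le_pow_right₀ ha k.le_succ) hy
    have hdiv : a ^ (k + 1) * y / a = a ^ k * y := by field_simp; ring
    have hscale := hf (a ^ (k + 1) * y) ⟨by positivity, hk⟩
    rw [hdiv] at hscale
    rw [ih (hstep.trans hk), hscale]
    ring

theorem three_pow_mul_two_div_eq (m : ℕ) :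
    (3 : ℝ) ^ m * (2 / (3 ^ (m + 1) - 1)) = (2 + 2 / (3 ^ (m + 1) - 1)) / 3 := by
  have h : (3 : ℝ) ^ (m + 1) - 1 ≠ 0 := by
    have : (1 : ℝ) < 3 ^ (m + 1) := one_lt_pow₀ (by norm_num) m.succ_ne_zero
    linarith
  field_simp
  ring

theorem bourbaki_stmt_general (f : ℝ → ℝ)
    (hw1 : ∀ x ∈ Set.Icc (0:ℝ) 1, f (x / 3) = (2/3) * f x)
    (hw3 : ∀ x ∈ Set.Icc (0:ℝ) 1, f ((2 + x) / 3) = 1/3 + (2/3) * f x) :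
    ∀ i : ℕ, 0 < i → f (2 / (3 ^ i - 1)) = 2 ^ (i - 1) / (3 ^ i - 2 ^ i) := by
  intro i hi
  obtain ⟨m, rfl⟩ : ∃ m, i = m + 1 := ⟨i - 1, (Nat.succ_pred_eq_of_pos hi).symm⟩
  have h3m : (1 : ℝ) ≤ 3 ^ m := one_le_pow₀ (by norm_num)
  have hpow : (3 : ℝ) ^ (m + 1) = 3 * 3 ^ m := pow_succ' 3 m
  set x : ℝ := 2 / (3 ^ (m + 1) - 1)
  have hx0 : 0 ≤ x := div_nonneg zero_le_two (by linarith)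
  have hx1 : x ≤ 1 := (div_le_one (by linarith)).2 (by linarith)
  have hfix := three_pow_mul_two_div_eq m
  have hself := apply_eq_pow_mul_apply_pow_mul (by norm_num) hw1 m hx0
    (by rw [hfix]; linarith)
  rw [hfix, hw3 x ⟨hx0, hx1⟩] at hself
  have hgap : (2 : ℝ) ^ (m + 1) < 3 ^ (m + 1) :=
    pow_lt_pow_left₀ (by norm_num) (by norm_num) m.succ_ne_zero
  have hmul : (2 / 3 : ℝ) ^ m * 3 ^ m = 2 ^ m := by rw [← mul_pow]; norm_num
  rw [Nat.add_sub_cancel, eq_div_iff (by linarith)]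
  linear_combination (3 * (3 : ℝ) ^ m) * hself + (1 + 2 * f x) * hmul

theorem bourbaki_stmt (f : ℝ → ℝ)
    (hcont : ContinuousOn f (Set.Icc 0 1))
    (h0 : f 0 = 0) (h1 : f 1 = 1)
    (hw1 : ∀ x ∈ Set.Icc (0:ℝ) 1, f (x / 3) = (2/3) * f x)
    (hw2 : ∀ x ∈ Set.Icc (0:ℝ) 1, f ((2 - x) / 3) = (1/3) * (1 + f x))
    (hw3 : ∀ x ∈ Set.Icc (0:ℝ) 1, f ((2 + x) / 3) = 1/3 + (2/3) * f x) :
    ∀ i : ℕ, 0 < i → f (2 / (3 ^ i - 1)) = 2 ^ (i - 1) / (3 ^ i - 2 ^ i) :=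
  bourbaki_stmt_general f hw1 hw3
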